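/- Assume all agents have additive cost functions and let α ≥ 1. Every α-EFX allocation is (4α/(2α+1))-PMMS. Moreover this bound is tight: for every n ≥ 2 and α ≥ 1 there exists an n-agent instance with additive cost functions, an α-EFX allocation A, an agent i and an agent j ≠ i with c_i(A_i) = (4α/(2α+1))·MMS_i(2, A_i ∪ A_j). -/

import Mathlib

open Finset

/-- `T` is a `k`-partition of the bundle `S`: pairwise disjoint bundles whose union is `S`. -/
def IsPartitionOf {E : Type*} [DecidableEq E] {k : ℕ} (T : Fin k → Finset E) (S : Finset E) :
    Prop :=
  (∀ i j : Fin k, i ≠ j → Disjoint (T i) (T j)) ∧ Finset.univ.biUnion T = S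

/-- The maximin share of cost function `c` on `S` among `k` agents:
the minimum over `k`-partitions of `S` of the maximum cost of a bundle. -/
noncomputable def MMS {E : Type*} [DecidableEq E] (c : Finset E → ℝ) (k : ℕ) (S : Finset E) :
    ℝ :=
  sInf { m : ℝ | ∃ T : Fin k → Finset E, IsPartitionOf T S ∧ m = ⨆ j : Fin k, c (T j) }

/-- `c` is a nonnegative additive cost function. -/
def AdditiveCost {E : Type*} [DecidableEq E] (c : Finset E → ℝ) : Prop :=
  (∀ S : Finset E, 0 ≤ c S) ∧ ∀ S : Finset E, c S = ∑ e ∈ S, c {e}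

/-- `c` is a nonnegative monotone cost function with `c ∅ = 0`. -/
def MonotoneCost {E : Type*} (c : Finset E → ℝ) : Prop :=
  (∀ S : Finset E, 0 ≤ c S) ∧ c ∅ = 0 ∧ ∀ ⦃S T : Finset E⦄, S ⊆ T → c S ≤ c T

/-- `c` is subadditive. -/
def SubadditiveCost {E : Type*} [DecidableEq E] (c : Finset E → ℝ) : Prop :=
  ∀ S T : Finset E, c (S ∪ T) ≤ c S + c T

/-- `c` is submodular. -/
def SubmodularCost {E : Type*} [DecidableEq E] (c : Finset E → ℝ) : Prop :=
  ∀ S T : Finset E, c (S ∪ T) + c (S ∩ T) ≤ c S + c T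

/-- `A` is an allocation of all chores among the `n` agents. -/
def IsAllocation {E : Type*} [DecidableEq E] [Fintype E] {n : ℕ} (A : Fin n → Finset E) : Prop :=
  IsPartitionOf A Finset.univ

/-- `A` is `α`-envy-free. -/
def IsEF {E : Type*} {n : ℕ} (α : ℝ) (c : Fin n → Finset E → ℝ) (A : Fin n → Finset E) : Prop :=
  ∀ i j, c i (A i) ≤ α * c i (A j)

/-- `A` is `α`-envy-free up to one item. -/
def IsEF1 {E : Type*} [DecidableEq E] {n : ℕ} (α : ℝ) (c : Fin n → Finset E → ℝ)
    (A : Fin n → Finset E) : Prop :=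
  ∀ i j, i ≠ j → A i = ∅ ∨ ∃ e ∈ A i, c i (A i \ {e}) ≤ α * c i (A j)

/-- `A` is `α`-envy-free up to any (positive-cost) item. -/
def IsEFX {E : Type*} [DecidableEq E] {n : ℕ} (α : ℝ) (c : Fin n → Finset E → ℝ)
    (A : Fin n → Finset E) : Prop :=
  ∀ i j, i ≠ j → ∀ e ∈ A i, 0 < c i {e} → c i (A i \ {e}) ≤ α * c i (A j)

/-- `A` is an `α`-MMS allocation. -/
def IsMMSFair {E : Type*} [DecidableEq E] [Fintype E] {n : ℕ} (α : ℝ)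
    (c : Fin n → Finset E → ℝ) (A : Fin n → Finset E) : Prop :=
  ∀ i, c i (A i) ≤ α * MMS (c i) n Finset.univ

/-- `A` is an `α`-PMMS allocation. -/
def IsPMMS {E : Type*} [DecidableEq E] {n : ℕ} (α : ℝ)
    (c : Fin n → Finset E → ℝ) (A : Fin n → Finset E) : Prop :=
  ∀ i j, i ≠ j → c i (A i) ≤ α * MMS (c i) 2 (A i ∪ A j)

/-- The optimal (minimum) social cost over all allocations. -/
noncomputable def OPT {E : Type*} [DecidableEq E] [Fintype E] {n : ℕ}
    (c : Fin n → Finset E → ℝ) : ℝ :=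
  sInf { s : ℝ | ∃ A : Fin n → Finset E, IsAllocation A ∧ s = ∑ i, c i (A i) }

/-!
If agent `i` has a single chore of positive cost, that chore alone already costs `c_i(A_i)` and
lies in one bundle of every 2-partition of `A_i ∪ A_j`, so `c_i(A_i) ≤ MMS_i(2, A_i ∪ A_j)`.
Otherwise `A_i` has two chores `e ≠ f` of positive cost, `A_i` is covered by `A_i ∖ {e}` and
`A_i ∖ {f}`, and α-EFX gives `c_i(A_i) ≤ 2α c_i(A_j)`; combined with the proportional bound
`MMS_i(2, A_i ∪ A_j) ≥ (c_i(A_i) + c_i(A_j)) / 2` this is exactly the ratio `4α/(2α+1)`.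
The ratio is attained with identical costs on `2n` chores, two per agent: agent `0` holds two
chores of cost `α`, every other agent two chores of cost `1/2`, and `A_0 ∪ A_1` splits into two
halves of cost `α + 1/2`.
-/

section MaximinShare

variable {E : Type*} [DecidableEq E] {c : Finset E → ℝ} {k : ℕ} {S : Finset E}

theorem isPartitionOf_ite_zero [NeZero k] (S : Finset E) :
    IsPartitionOf (fun j : Fin k => if j = 0 then S else ∅) S := by
  refine ⟨fun i j hij => ?_, ?_⟩
  · by_cases hi : i = 0
    · simp [hi, Ne.symm (hi ▸ hij)]
    · simp [hi]
  · ext e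
    simp only [mem_biUnion, mem_univ, true_and]
    exact ⟨fun ⟨j, hj⟩ => by split_ifs at hj <;> simp_all, fun h => ⟨0, by simp [h]⟩⟩

theorem isPartitionOf_pair {X Y : Finset E} (hXY : Disjoint X Y) :
    IsPartitionOf ![X, Y] (X ∪ Y) := by
  refine ⟨fun i j hij => ?_, ?_⟩
  · fin_cases i <;> fin_cases j <;> simp_all [hXY.symm]
  · ext e
    simp [Fin.exists_fin_two]

theorem le_MMS [NeZero k] {L : ℝ}
    (h : ∀ T : Fin k → Finset E, IsPartitionOf T S → L ≤ ⨆ j, c (T j)) : L ≤ MMS c k S :=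
  le_csInf ⟨_, _, isPartitionOf_ite_zero S, rfl⟩ fun _ ⟨T, hT, hm⟩ => hm ▸ h T hT

theorem MMS_le (hc : ∀ S, 0 ≤ c S) {T : Fin k → Finset E} (hT : IsPartitionOf T S) :
    MMS c k S ≤ ⨆ j, c (T j) :=
  csInf_le ⟨0, fun _ ⟨_, _, hm⟩ => hm ▸ Real.iSup_nonneg fun _ => hc _⟩ ⟨T, hT, rfl⟩

theorem MMS_nonneg (hc : ∀ S, 0 ≤ c S) : 0 ≤ MMS c k S :=
  Real.sInf_nonneg fun _ ⟨_, _, hm⟩ => hm ▸ Real.iSup_nonneg fun _ => hc _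

theorem le_MMS_of_mem [NeZero k] (hc : Monotone c) {e : E} (he : e ∈ S) :
    c {e} ≤ MMS c k S := by
  refine le_MMS fun T hT => ?_
  obtain ⟨j, -, hej⟩ := mem_biUnion.mp (hT.2 ▸ he)
  exact (hc (singleton_subset_iff.mpr hej)).trans
    (le_ciSup (f := fun j => c (T j)) (Finite.bddAbove_range _) j)

end MaximinShare

namespace AdditiveCost

variable {E : Type*} [DecidableEq E] {c : Finset E → ℝ}

theorem union_of_disjoint (hc : AdditiveCost c) {S T : Finset E} (h : Disjoint S T) :
    c (S ∪ T) = c S + c T := by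
  rw [hc.2, hc.2 S, hc.2 T, sum_union h]

theorem sdiff_singleton (hc : AdditiveCost c) {S : Finset E} {e : E} (he : e ∈ S) :
    c (S \ {e}) = c S - c {e} := by
  rw [hc.2, hc.2 S, sdiff_singleton_eq_erase, sum_erase_eq_sub he]

theorem monotone (hc : AdditiveCost c) : Monotone c := fun S T hST => by
  rw [hc.2 S, hc.2 T]
  exact sum_le_sum_of_subset_of_nonneg hST fun e _ _ => hc.1 {e}

theorem subadditive (hc : AdditiveCost c) : SubadditiveCost c := fun S T => by
  rw [hc.2, hc.2 S, hc.2 T, ← sum_union_inter]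
  exact le_add_of_nonneg_right (sum_nonneg fun e _ => hc.1 {e})

theorem sum_of_isPartitionOf (hc : AdditiveCost c) {k : ℕ} {T : Fin k → Finset E} {S : Finset E}
    (hT : IsPartitionOf T S) : ∑ j, c (T j) = c S := by
  have hdisj : ((univ : Finset (Fin k)) : Set (Fin k)).PairwiseDisjoint T :=
    fun i _ j _ hij => hT.1 i j hij
  simp_rw [hc.2 S, ← hT.2, sum_biUnion hdisj, ← hc.2]

theorem div_le_MMS (hc : AdditiveCost c) {k : ℕ} [NeZero k] (S : Finset E) :
    c S / k ≤ MMS c k S := by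
  refine le_MMS fun T hT => ?_
  rw [div_le_iff₀' (by simp [Nat.pos_of_neZero]), ← hc.sum_of_isPartitionOf hT]
  simpa using sum_le_card_nsmul univ (fun j => c (T j)) _
    fun j _ => le_ciSup (f := fun j => c (T j)) (Finite.bddAbove_range _) j

theorem MMS_two_union_eq (hc : AdditiveCost c) {X Y : Finset E} (hXY : Disjoint X Y)
    (h : c X = c Y) :
    MMS c 2 (X ∪ Y) = c X := by
  refine le_antisymm ((MMS_le hc.1 (isPartitionOf_pair hXY)).trans ?_) ?_
  · exact ciSup_le fun j => by fin_cases j <;> simp [h]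
  · simpa [hc.union_of_disjoint hXY, h] using hc.div_le_MMS (k := 2) (X ∪ Y)

theorem le_MMS_of_pos_subsingleton (hc : AdditiveCost c) {k : ℕ} [NeZero k] {B S : Finset E}
    (hBS : B ⊆ S) (hB : ∀ e ∈ B, ∀ f ∈ B, 0 < c {e} → 0 < c {f} → e = f) :
    c B ≤ MMS c k S := by
  by_cases hpos : ∃ e ∈ B, 0 < c {e}
  · obtain ⟨e, he, hce⟩ := hpos
    have hBe : c B = c {e} := by
      rw [hc.2 B]
      refine sum_eq_single_of_mem e he fun f hf hfe => ?_
      exact ((hc.1 {f}).eq_or_lt.resolve_right fun hcf => hfe (hB f hf e he hcf hce)).symm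
    exact hBe ▸ le_MMS_of_mem hc.monotone (hBS he)
  · push Not at hpos
    have hB0 : c B = 0 := by
      rw [hc.2 B]
      exact sum_eq_zero fun e he => le_antisymm (hpos e he) (hc.1 {e})
    exact hB0 ▸ MMS_nonneg hc.1

end AdditiveCost

theorem SubadditiveCost.le_sdiff_add_sdiff {E : Type*} [DecidableEq E] {c : Finset E → ℝ}
    (hc : SubadditiveCost c) {B : Finset E} {e f : E} (hef : e ≠ f) :
    c B ≤ c (B \ {e}) + c (B \ {f}) := by
  have hB : B \ {e} ∪ B \ {f} = B := by
    ext x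
    simp only [mem_union, mem_sdiff, mem_singleton]
    grind
  calc c B = c (B \ {e} ∪ B \ {f}) := by rw [hB]
    _ ≤ c (B \ {e}) + c (B \ {f}) := hc _ _

theorem cost_le_mul_MMS_two_of_isEFX_pair {E : Type*} [DecidableEq E] {c : Finset E → ℝ}
    (hc : AdditiveCost c) {α : ℝ} (hα : 1 ≤ α) {B C : Finset E} (hBC : Disjoint B C)
    (hefx : ∀ e ∈ B, 0 < c {e} → c (B \ {e}) ≤ α * c C) :
    c B ≤ 4 * α / (2 * α + 1) * MMS c 2 (B ∪ C) := by
  have hden : 0 < 2 * α + 1 := by linarith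
  by_cases hB : ∀ e ∈ B, ∀ f ∈ B, 0 < c {e} → 0 < c {f} → e = f
  · have hratio : 1 ≤ 4 * α / (2 * α + 1) := by rw [le_div_iff₀ hden]; linarith
    have hM : c B ≤ MMS c 2 (B ∪ C) := hc.le_MMS_of_pos_subsingleton subset_union_left hB
    exact hM.trans (le_mul_of_one_le_left ((hc.1 B).trans hM) hratio)
  · push Not at hB
    obtain ⟨e, he, f, hf, hce, hcf, hef⟩ := hB
    have hefx2 : c B ≤ 2 * α * c C := by
      linarith [hc.subadditive.le_sdiff_add_sdiff (B := B) hef, hefx e he hce, hefx f hf hcf]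
    have hhalf : (c B + c C) / 2 ≤ MMS c 2 (B ∪ C) := by
      simpa [hc.union_of_disjoint hBC] using hc.div_le_MMS (k := 2) (B ∪ C)
    calc c B ≤ 4 * α / (2 * α + 1) * ((c B + c C) / 2) := by
          rw [div_mul_eq_mul_div, le_div_iff₀ hden]; linarith
      _ ≤ 4 * α / (2 * α + 1) * MMS c 2 (B ∪ C) := by gcongr

theorem isPMMS_of_isEFX {E : Type*} [DecidableEq E] [Fintype E] {n : ℕ} {α : ℝ} (hα : 1 ≤ α)
    {c : Fin n → Finset E → ℝ} (hc : ∀ i, AdditiveCost (c i)) {A : Fin n → Finset E}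
    (hA : IsAllocation A) (hefx : IsEFX α c A) : IsPMMS (4 * α / (2 * α + 1)) c A :=
  fun i j hij => cost_le_mul_MMS_two_of_isEFX_pair (hc i) hα (hA.1 i j hij) (hefx i j hij)

section TightInstance

variable (α : ℝ) (n : ℕ)

noncomputable def tightWeight (e : ℕ) : ℝ := if e < 2 then α else 1 / 2

noncomputable def tightCost (S : Finset (Fin (n * 2))) : ℝ := ∑ e ∈ S, tightWeight α e

def tightAlloc (i : Fin n) : Finset (Fin (n * 2)) := univ.filter fun e => e.divNat = i

variable {α n}

theorem tightAlloc_eq (i : Fin n) :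
    tightAlloc n i = {⟨2 * i, by omega⟩, ⟨2 * i + 1, by omega⟩} := by
  ext e
  simp only [tightAlloc, mem_filter, mem_univ, true_and, mem_insert, mem_singleton, Fin.ext_iff,
    Fin.coe_divNat]
  omega

theorem isAllocation_tightAlloc : IsAllocation (tightAlloc n) := by
  refine ⟨fun i j hij => disjoint_filter.mpr fun e _ hi hj => hij (hi ▸ hj), ?_⟩
  ext e
  simp [tightAlloc]

theorem additiveCost_tightCost (hα : 1 ≤ α) : AdditiveCost (tightCost α n) := by
  refine ⟨fun S => sum_nonneg fun e _ => ?_, fun S => by simp [tightCost]⟩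
  unfold tightWeight
  split_ifs <;> linarith

theorem tightCost_tightAlloc (i : Fin n) :
    tightCost α n (tightAlloc n i) = if (i : ℕ) = 0 then 2 * α else 1 := by
  rw [tightCost, tightAlloc_eq, sum_pair (by simp)]
  by_cases hi : (i : ℕ) = 0
  · simp [tightWeight, hi]
    ring
  · simp [tightWeight, hi, show ¬2 * (i : ℕ) < 2 by omega, show ¬2 * (i : ℕ) + 1 < 2 by omega]
    norm_num

theorem isEFX_tightAlloc (hα : 1 ≤ α) :
    IsEFX α (fun _ => tightCost α n) (tightAlloc n) := by
  intro i j hij e he _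
  have hc := additiveCost_tightCost (n := n) hα
  have he' : tightWeight α e = if (i : ℕ) = 0 then α else 1 / 2 := by
    rw [tightAlloc_eq] at he
    simp only [mem_insert, mem_singleton, Fin.ext_iff] at he
    unfold tightWeight
    split_ifs <;> first | rfl | omega
  have hrest : tightCost α n (tightAlloc n i \ {e}) ≤ α := by
    rw [hc.sdiff_singleton he, tightCost_tightAlloc, tightCost, sum_singleton, he']
    split_ifs <;> linarith
  have hj : 1 ≤ tightCost α n (tightAlloc n j) := by
    rw [tightCost_tightAlloc]
    split_ifs <;> linarith
  exact hrest.trans (le_mul_of_one_le_right (by linarith) hj)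

theorem MMS_tightCost_tightAlloc (hα : 1 ≤ α) (hn : 2 ≤ n) :
    MMS (tightCost α n) 2 (tightAlloc n ⟨0, by omega⟩ ∪ tightAlloc n ⟨1, by omega⟩) =
      α + 1 / 2 := by
  have hsplit : tightAlloc n ⟨0, by omega⟩ ∪ tightAlloc n ⟨1, by omega⟩ =
      {⟨0, by omega⟩, ⟨2, by omega⟩} ∪ {⟨1, by omega⟩, ⟨3, by omega⟩} := by
    simp only [tightAlloc_eq]
    ext e
    simp only [mem_union, mem_insert, mem_singleton]
    tauto
  have hhalf (a b : ℕ) (ha : a < 2) (hb : 2 ≤ b) (hbn : b < n * 2) :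
      tightCost α n {⟨a, by omega⟩, ⟨b, hbn⟩} = α + 1 / 2 := by
    rw [tightCost, sum_pair (by simp [Fin.ext_iff]; omega)]
    simp [tightWeight, ha, show ¬b < 2 by omega]
  have hX := hhalf 0 2 (by omega) le_rfl (by omega)
  have hY := hhalf 1 3 (by omega) (by omega) (by omega)
  rw [hsplit, (additiveCost_tightCost hα).MMS_two_union_eq (by simp [Fin.ext_iff])
    (hX.trans hY.symm), hX]

end TightInstance

/-- Proposition 4.7: with additive cost functions, every `α`-EFX allocation is
`4α/(2α+1)`-PMMS, and this bound is tight. -/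
theorem alphaEFX_is_PMMS_and_tight :
    (∀ (E : Type) [DecidableEq E] [Fintype E] (n : ℕ), 2 ≤ n → ∀ α : ℝ, 1 ≤ α →
      ∀ c : Fin n → Finset E → ℝ, (∀ i, AdditiveCost (c i)) →
      ∀ A : Fin n → Finset E, IsAllocation A → IsEFX α c A →
        IsPMMS (4 * α / (2 * α + 1)) c A) ∧
    (∀ n : ℕ, 2 ≤ n → ∀ α : ℝ, 1 ≤ α →
      ∃ (m : ℕ) (c : Fin n → Finset (Fin m) → ℝ) (A : Fin n → Finset (Fin m)),
        (∀ i, AdditiveCost (c i)) ∧ IsAllocation A ∧ IsEFX α c A ∧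
        ∃ i j, i ≠ j ∧
          c i (A i) = (4 * α / (2 * α + 1)) * MMS (c i) 2 (A i ∪ A j)) := by
  refine ⟨fun E _ _ n _ α hα c hc A hA hefx => isPMMS_of_isEFX hα hc hA hefx,
    fun n hn α hα => ?_⟩
  refine ⟨n * 2, fun _ => tightCost α n, tightAlloc n, fun _ => additiveCost_tightCost hα,
    isAllocation_tightAlloc, isEFX_tightAlloc hα, ⟨0, by omega⟩, ⟨1, by omega⟩,
    by simp [Fin.ext_iff], ?_⟩
  beta_reduce
  rw [tightCost_tightAlloc, if_pos rfl, MMS_tightCost_tightAlloc hα hn]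
  field_simp
  ring
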